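/- arXiv:2201.02905 — 2 statements merged into one kernel-verified Lean document; each statement's English description precedes it below -/
import Mathlib

section
/- Define h(x) := 1/2^(2^(2x)). Let k ≥ 1 and β ≥ 2 be integers, let 0 ≤ δ ≤ 0.2 satisfy h(k) − 4δ ≥ 0, and let H be a bipartite (β,k)-HEDCS with vertex parts P and Q, with P nonempty, having at least (1−δ)·β·|P|/2 edges. Then 2|Q|/(2|Q| + |P|) ≥ 1/2 + h(k)/6 − (2/3)·δ. -/
open Finset

variable {V : Type*} [DecidableEq V]

/-- Degree of a vertex in an edge set. -/
def deg (E : Finset (Sym2 V)) (v : V) : ℕ := (E.filter (fun e => v ∈ e)).card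

/-- Edge-degree: the sum of the degrees of the two endpoints. -/
def edeg (E : Finset (Sym2 V)) (e : Sym2 V) : ℕ :=
  Sym2.lift ⟨fun u v => deg E u + deg E v, fun _ _ => add_comm _ _⟩ e

/-- Generalized `(β,β⁻,k)`-HEDCS of `G`: a hierarchical decomposition
`∅ = H_0 ⊆ H_1 ⊆ … ⊆ H_k = Hs` with edge-degrees in `H_i` of new edges at most `β`,
and every edge of `G` outside `Hs` has edge-degree at least `β⁻` in `Hs`. -/
def IsHEDCSgen (G Hs : Finset (Sym2 V)) (β βm k : ℕ) : Prop :=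
  Hs ⊆ G ∧ ∃ H : ℕ → Finset (Sym2 V),
    H 0 = ∅ ∧ H k = Hs ∧
    (∀ i < k, H i ⊆ H (i + 1)) ∧
    (∀ i, 1 ≤ i → i ≤ k → ∀ e ∈ H i \ H (i - 1), edeg (H i) e ≤ β) ∧
    (∀ e ∈ G \ Hs, βm ≤ edeg Hs e)

/-- `(β,k)`-HEDCS of `G`. -/
def IsHEDCS (G Hs : Finset (Sym2 V)) (β k : ℕ) : Prop :=
  IsHEDCSgen G Hs β (β - 1) k

/-- Bipartite `(β,k)`-HEDCS with vertex parts `P` and `Q`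
(the base graph is `Hs` itself, so the second HEDCS condition is vacuous). -/
def IsBipartiteHEDCS (P Q : Finset V) (Hs : Finset (Sym2 V)) (β k : ℕ) : Prop :=
  Disjoint P Q ∧
  (∀ e ∈ Hs, ∃ u v, e = s(u, v) ∧ u ∈ P ∧ v ∈ Q) ∧
  ∃ H : ℕ → Finset (Sym2 V),
    H 0 = ∅ ∧ H k = Hs ∧
    (∀ i < k, H i ⊆ H (i + 1)) ∧
    (∀ i, 1 ≤ i → i ≤ k → ∀ e ∈ H i \ H (i - 1), edeg (H i) e ≤ β)

/-- A matching: a set of pairwise vertex-disjoint (non-loop) edges. -/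
def IsMatching (M : Finset (Sym2 V)) : Prop :=
  (∀ e ∈ M, ¬ e.IsDiag) ∧
  ∀ e ∈ M, ∀ f ∈ M, e ≠ f → ∀ v : V, v ∈ e → v ∉ f

/-- The maximum matching size of the edge set `E`. -/
noncomputable def matchNum (E : Finset (Sym2 V)) : ℕ :=
  sSup {n : ℕ | ∃ M : Finset (Sym2 V), M ⊆ E ∧ IsMatching M ∧ M.card = n}

/-- `h(x) = 1/2^(2^(2x))`. -/
noncomputable def hfun (x : ℕ) : ℝ := 1 / 2 ^ (2 ^ (2 * x))

lemma edeg_mk (E : Finset (Sym2 V)) (x y : V) : edeg E s(x,y) = deg E x + deg E y := rfl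

lemma deg_mono {S T : Finset (Sym2 V)} (h : S ⊆ T) (v : V) : deg S v ≤ deg T v :=
  card_le_card (filter_subset_filter _ h)

lemma deg_le_edeg {E : Finset (Sym2 V)} {v : V} {e : Sym2 V} (h : v ∈ e) :
    deg E v ≤ edeg E e := by
  induction e using Sym2.inductionOn with
  | hf x y =>
    rw [Sym2.mem_iff] at h
    rw [edeg_mk]
    rcases h with rfl | rfl
    · exact Nat.le_add_right _ _
    · exact Nat.le_add_left _ _

lemma sum_deg_mul (P : Finset V) (S : Finset (Sym2 V)) (w : V → ℕ) :
    ∑ v ∈ P, deg S v * w v = ∑ e ∈ S, ∑ v ∈ P.filter (fun v => v ∈ e), w v := by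
  calc ∑ v ∈ P, deg S v * w v
      = ∑ v ∈ P, ∑ e ∈ S, (if v ∈ e then w v else 0) := by
        refine sum_congr rfl fun v _ => ?_
        rw [← sum_filter, sum_const, smul_eq_mul, deg]
    _ = ∑ e ∈ S, ∑ v ∈ P, (if v ∈ e then w v else 0) := sum_comm
    _ = _ := sum_congr rfl fun e _ => (sum_filter _ _).symm

lemma filter_mem_pair {P : Finset V} {u v : V} (hu : u ∈ P) (hv : v ∉ P) :
    P.filter (fun x => x ∈ s(u,v)) = {u} := by
  ext x
  simp only [mem_filter, Sym2.mem_iff, mem_singleton]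
  constructor
  · rintro ⟨hx, rfl | rfl⟩
    · rfl
    · exact absurd hx hv
  · rintro rfl; exact ⟨hu, Or.inl rfl⟩

variable {P Q : Finset V} {S : Finset (Sym2 V)}

lemma sum_deg_P (hd : Disjoint P Q)
    (hbi : ∀ e ∈ S, ∃ u v, e = s(u,v) ∧ u ∈ P ∧ v ∈ Q) :
    ∑ v ∈ P, deg S v = S.card := by
  have := sum_deg_mul P S (fun _ => 1)
  simp only [mul_one] at this
  rw [this, card_eq_sum_ones S]
  refine sum_congr rfl fun e he => ?_
  obtain ⟨u, v, rfl, hu, hv⟩ := hbi e he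
  rw [filter_mem_pair hu (disjoint_right.mp hd hv), sum_singleton]

lemma sum_deg_Q (hd : Disjoint P Q)
    (hbi : ∀ e ∈ S, ∃ u v, e = s(u,v) ∧ u ∈ P ∧ v ∈ Q) :
    ∑ v ∈ Q, deg S v = S.card := by
  refine sum_deg_P (V := V) hd.symm (fun e he => ?_)
  obtain ⟨u, v, rfl, hu, hv⟩ := hbi e he
  exact ⟨v, u, Sym2.eq_swap, hv, hu⟩

lemma sum_deg_mul_add (hd : Disjoint P Q)
    (hbi : ∀ e ∈ S, ∃ u v, e = s(u,v) ∧ u ∈ P ∧ v ∈ Q) (w : V → ℕ) :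
    ∑ v ∈ P, deg S v * w v + ∑ v ∈ Q, deg S v * w v
      = ∑ e ∈ S, Sym2.lift ⟨fun a b => w a + w b, fun _ _ => add_comm _ _⟩ e := by
  rw [sum_deg_mul, sum_deg_mul, ← sum_add_distrib]
  refine sum_congr rfl fun e he => ?_
  obtain ⟨u, v, rfl, hu, hv⟩ := hbi e he
  rw [filter_mem_pair hu (disjoint_right.mp hd hv), Sym2.eq_swap (a := u),
    filter_mem_pair hv (disjoint_left.mp hd hu), sum_singleton, sum_singleton,
    ← Sym2.eq_swap (a := u), Sym2.lift_mk]


lemma deg_le_beta {β k : ℕ} {Hf : ℕ → Finset (Sym2 V)} (h0 : Hf 0 = ∅)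
    (hcond : ∀ i, 1 ≤ i → i ≤ k → ∀ e ∈ Hf i \ Hf (i-1), edeg (Hf i) e ≤ β) :
    ∀ i ≤ k, ∀ v, deg (Hf i) v ≤ β := by
  intro i
  induction i with
  | zero => intro _ v; simp [deg, h0]
  | succ n ih =>
    intro hik v
    by_cases hex : ∃ e ∈ Hf (n+1) \ Hf n, v ∈ e
    · obtain ⟨e, he, hve⟩ := hex
      refine le_trans (deg_le_edeg hve) ?_
      have := hcond (n+1) (Nat.le_add_left 1 n) hik e (by simpa using he)
      simpa using this
    · push_neg at hex
      have hsub : (Hf (n+1)).filter (fun e => v ∈ e) ⊆ (Hf n).filter (fun e => v ∈ e) := by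
        intro e he
        rw [mem_filter] at he ⊢
        refine ⟨?_, he.2⟩
        by_contra hne
        exact hex e (mem_sdiff.mpr ⟨he.1, hne⟩) he.2
      calc deg (Hf (n+1)) v ≤ deg (Hf n) v := card_le_card hsub
        _ ≤ β := ih (le_trans (Nat.le_succ n) hik) v


lemma key_ineq {β : ℕ} {P Q : Finset V} {Hs S : Finset (Sym2 V)}
    (hd : Disjoint P Q)
    (hbiH : ∀ e ∈ Hs, ∃ u v, e = s(u,v) ∧ u ∈ P ∧ v ∈ Q)
    (hSH : S ⊆ Hs)
    (hedeg : ∀ e ∈ S, edeg Hs e ≤ β)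
    (hdegQ : ∀ v, deg Hs v ≤ β) :
    (S.card : ℝ)^2 + (β : ℝ) * P.card * Hs.card ≤ (β:ℝ)^2 * P.card * Q.card := by
  have hbiS : ∀ e ∈ S, ∃ u v, e = s(u,v) ∧ u ∈ P ∧ v ∈ Q := fun e he => hbiH e (hSH he)
  -- total edge-degree sum
  have hc : ∑ v ∈ P, deg S v * deg Hs v + ∑ v ∈ Q, deg S v * deg Hs v
      = ∑ e ∈ S, edeg Hs e := sum_deg_mul_add hd hbiS (deg Hs)
  have hce : ∑ e ∈ S, edeg Hs e ≤ S.card * β := by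
    calc ∑ e ∈ S, edeg Hs e ≤ ∑ _e ∈ S, β := sum_le_sum hedeg
      _ = S.card * β := by rw [sum_const, smul_eq_mul]
  -- real versions
  have hsumR : (∑ v ∈ P, (deg S v : ℝ) * (deg Hs v : ℝ))
      + ∑ v ∈ Q, (deg S v : ℝ) * (deg Hs v : ℝ) ≤ (S.card : ℝ) * β := by
    exact_mod_cast hc.trans_le hce
  have hQm : ∑ v ∈ Q, ((deg Hs v : ℝ)) = (Hs.card : ℝ) := by exact_mod_cast sum_deg_Q hd hbiH
  have hQS : ∑ v ∈ Q, ((deg S v : ℝ)) = (S.card : ℝ) := by exact_mod_cast sum_deg_Q hd hbiS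
  have hPS : ∑ v ∈ P, ((deg S v : ℝ)) = (S.card : ℝ) := by exact_mod_cast sum_deg_P hd hbiS
  -- pointwise inequality on Q
  have hptQ : ∀ v ∈ Q, (β:ℝ) * (deg S v : ℝ) + (β:ℝ) * (deg Hs v : ℝ)
      ≤ (deg S v : ℝ) * (deg Hs v : ℝ) + (β:ℝ)^2 := by
    intro v _
    have h1 : (deg S v : ℝ) ≤ (deg Hs v : ℝ) := by exact_mod_cast deg_mono hSH v
    have h2 : (deg Hs v : ℝ) ≤ (β : ℝ) := by exact_mod_cast hdegQ v
    nlinarith [h1, h2]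
  have hsumQ : (β:ℝ) * (S.card:ℝ) + (β:ℝ) * (Hs.card:ℝ) ≤ (∑ v ∈ Q, (deg S v : ℝ) * (deg Hs v : ℝ)) + (β:ℝ)^2 * (Q.card:ℝ) := by
    have := sum_le_sum hptQ
    rw [sum_add_distrib, ← mul_sum, ← mul_sum, sum_add_distrib, sum_const, hQS, hQm] at this
    simpa [nsmul_eq_mul, mul_comm] using this
  have hA : ∑ v ∈ P, (deg S v : ℝ) * (deg Hs v : ℝ) ≤ (β:ℝ)^2 * (Q.card:ℝ) - (β:ℝ) * (Hs.card:ℝ) := by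
    linarith
  -- Cauchy-Schwarz on P
  have hCS : (S.card:ℝ)^2 ≤ (P.card:ℝ) * ∑ v ∈ P, ((deg S v : ℝ))^2 := by
    have := sq_sum_le_card_mul_sum_sq (s := P) (f := fun v => (deg S v : ℝ))
    rw [hPS] at this
    exact this
  have hsq : ∑ v ∈ P, ((deg S v : ℝ))^2 ≤ ∑ v ∈ P, (deg S v : ℝ) * (deg Hs v : ℝ) := by
    refine sum_le_sum fun v _ => ?_
    have h1 : (deg S v : ℝ) ≤ (deg Hs v : ℝ) := by exact_mod_cast deg_mono hSH v
    have h0 : (0:ℝ) ≤ (deg S v : ℝ) := Nat.cast_nonneg _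
    nlinarith
  have hp0 : (0:ℝ) ≤ (P.card:ℝ) := Nat.cast_nonneg _
  have : (S.card:ℝ)^2 ≤ (P.card:ℝ) * ((β:ℝ)^2 * (Q.card:ℝ) - (β:ℝ) * (Hs.card:ℝ)) :=
    hCS.trans ((mul_le_mul_of_nonneg_left (hsq.trans hA) hp0))
  nlinarith [this]


noncomputable def gfun : ℕ → ℝ
  | 0 => 1/16
  | (n+1) => (gfun n)^2 / 48

lemma gfun_pos (n : ℕ) : 0 < gfun n := by
  induction n with
  | zero => norm_num [gfun]
  | succ n ih => rw [gfun]; positivity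

lemma gfun_le (n : ℕ) : gfun n ≤ 1/16 := by
  induction n with
  | zero => norm_num [gfun]
  | succ n ih => rw [gfun]; nlinarith [gfun_pos n]

lemma gfun_succ_le (n : ℕ) : gfun (n+1) ≤ gfun n / 4 := by
  rw [gfun]; nlinarith [gfun_pos n, gfun_le n]

lemma hfun_pos (n : ℕ) : 0 < hfun n := by
  unfold hfun; positivity

lemma hfun_succ_le (n : ℕ) : hfun (n+1) ≤ 1/16 := by
  unfold hfun
  rw [div_le_div_iff₀ (by positivity) (by norm_num)]
  have h4 : (4:ℕ) ≤ 2 ^ (2 * (n+1)) := by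
    calc (4:ℕ) = 2^2 := by norm_num
    _ ≤ 2 ^ (2 * (n+1)) := Nat.pow_le_pow_right (by norm_num) (by omega)
  calc (1:ℝ) * 16 = 2^(4:ℕ) := by norm_num
    _ ≤ 2 ^ (2 ^ (2 * (n+1))) := by
        apply pow_le_pow_right₀ (by norm_num) h4
    _ = 2 ^ (2 ^ (2 * (n+1))) * 1 := by ring
    _ ≤ 1 * 2 ^ (2 ^ (2 * (n+1))) := by rw [one_mul, mul_one]

lemma hfun_sq (n : ℕ) : hfun (n+2) = (hfun (n+1))^4 := by
  unfold hfun
  rw [div_pow, one_pow, ← pow_mul]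
  congr 2
  have : 2 * (n+2) = (2 * (n+1)) + 2 := by ring
  rw [this, pow_add]
  ring

lemma gfun_ge (n : ℕ) : 3/8 * hfun (n+1) ≤ gfun n := by
  induction n with
  | zero =>
    have : hfun 1 = 1/16 := by norm_num [hfun]
    rw [this, gfun]; norm_num
  | succ n ih =>
    rw [gfun, hfun_sq]
    have h1 := hfun_succ_le n
    have h2 := hfun_pos (n+1)
    have e1 : 9/64 * (hfun (n+1))^2 ≤ gfun n ^ 2 := by nlinarith [ih, h2]
    have e2 : (hfun (n+1))^2 ≤ 1/256 := by nlinarith [h1, h2]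
    nlinarith [e1, e2, sq_nonneg (hfun (n+1))]


lemma arith1 (B m q : ℝ) (hB : 0 ≤ B) (hm : 0 ≤ m) (hq : 0 ≤ q)
    (key : m^2 + B*m ≤ B*q) (hmB : m ≤ (1/2+1/16)*B) :
    3*m - (1-1/16)*B ≤ q := by
  rcases eq_or_lt_of_le hB with h|h
  · nlinarith
  · nlinarith [mul_nonneg (show (0:ℝ) ≤ 3/4*B - m by linarith)
      (show (0:ℝ) ≤ 5/4*B - m by linarith), h]

lemma arith2 (g g' B m q E : ℝ) (hg : 0 < g) (hg' : 0 < g') (h3g : 3*g' = g^2/16)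
    (hB : 0 ≤ B) (hm : 0 ≤ m) (hq : 0 ≤ q) (key : E^2 + B*m ≤ B*q)
    (hE : g*B/4 ≤ E) (hmB : m ≤ (1/2+g')*B) :
    3*m - (1-g')*B ≤ q := by
  have hE2 : (g*B/4)^2 ≤ E^2 := by
    apply pow_le_pow_left₀ (by positivity) hE
  rcases eq_or_lt_of_le hB with h|h
  · nlinarith
  · nlinarith [hE2, key, hmB, h, mul_pos h h]

lemma main_ind (β : ℕ) : ∀ (n : ℕ) (P Q : Finset V) (Hs : Finset (Sym2 V))
    (Hf : ℕ → Finset (Sym2 V)),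
    Disjoint P Q →
    (∀ e ∈ Hs, ∃ u v, e = s(u,v) ∧ u ∈ P ∧ v ∈ Q) →
    Hf 0 = ∅ → Hf (n+1) = Hs →
    (∀ i < n+1, Hf i ⊆ Hf (i+1)) →
    (∀ i, 1 ≤ i → i ≤ n+1 → ∀ e ∈ Hf i \ Hf (i-1), edeg (Hf i) e ≤ β) →
    (Hs.card : ℝ) ≤ (1/2 + gfun n) * ((β:ℝ) * P.card) →
    3 * (Hs.card : ℝ) - (1 - gfun n) * ((β:ℝ) * P.card) ≤ (β:ℝ) * Q.card := by
  intro n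
  induction n with
  | zero =>
    intro P Q Hs Hf hd hbi h0 hk hmono hcond hm
    have hdegQ : ∀ v, deg Hs v ≤ β := by
      intro v
      have := deg_le_beta h0 hcond 1 le_rfl v
      rwa [hk] at this
    have hedeg : ∀ e ∈ Hs, edeg Hs e ≤ β := by
      intro e he
      have he' : e ∈ Hf 1 \ Hf 0 := by
        rw [h0, hk]; simpa using he
      have := hcond 1 le_rfl le_rfl e (by simpa using he')
      rwa [hk] at this
    have key := key_ineq hd hbi (Finset.Subset.refl Hs) hedeg hdegQ
    have hg : gfun 0 = 1/16 := by norm_num [gfun]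
    rw [hg] at hm ⊢
    have key' : ((Hs.card:ℝ))^2 + ((β:ℝ)*P.card) * Hs.card ≤ ((β:ℝ)*P.card) * ((β:ℝ) * Q.card) := by
      nlinarith [key]
    exact arith1 ((β:ℝ)*P.card) (Hs.card) ((β:ℝ)*Q.card) (by positivity) (Nat.cast_nonneg _)
      (by positivity) key' hm
  | succ n ih =>
    intro P Q Hs Hf hd hbi h0 hk hmono hcond hm
    set B : ℝ := (β:ℝ) * P.card with hB
    have hB0 : 0 ≤ B := by positivity
    have hsub : Hf (n+1) ⊆ Hf (n+2) := hmono (n+1) (by omega)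
    have hEcard : ((Hf (n+2) \ Hf (n+1)).card : ℝ)
        = (Hs.card : ℝ) - ((Hf (n+1)).card : ℝ) := by
      rw [card_sdiff_of_subset hsub, hk]
      have : (Hf (n+1)).card ≤ Hs.card := by rw [← hk]; exact card_le_card hsub
      push_cast [Nat.cast_sub]
      rw [Nat.cast_sub this]
    have hgp := gfun_pos n
    have hgp1 := gfun_pos (n+1)
    have hgs := gfun_succ_le n
    have hm0 : (0:ℝ) ≤ (Hs.card : ℝ) := Nat.cast_nonneg _
    have hq0 : (0:ℝ) ≤ (β:ℝ) * Q.card := by positivity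
    by_cases hsplit : ((Hf (n+2) \ Hf (n+1)).card : ℝ) ≤ gfun n * B / 4
    · -- Case A : few last-level edges; use induction hypothesis
      have hbi' : ∀ e ∈ Hf (n+1), ∃ u v, e = s(u,v) ∧ u ∈ P ∧ v ∈ Q := by
        intro e he
        exact hbi e (by rw [← hk]; exact hsub he)
      have hmono' : ∀ i < n+1, Hf i ⊆ Hf (i+1) := fun i hi => hmono i (by omega)
      have hcond' : ∀ i, 1 ≤ i → i ≤ n+1 → ∀ e ∈ Hf i \ Hf (i-1), edeg (Hf i) e ≤ β :=
        fun i h1 h2 => hcond i h1 (by omega)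
      have hm' : ((Hf (n+1)).card : ℝ) ≤ (1/2 + gfun n) * B := by
        have hmm : ((Hf (n+1)).card : ℝ) ≤ (Hs.card : ℝ) := by
          rw [← hk]; exact_mod_cast card_le_card hsub
        have : (1/2 + gfun (n+1)) * B ≤ (1/2 + gfun n) * B := by
          apply mul_le_mul_of_nonneg_right _ hB0
          linarith
        linarith
      have IH := ih P Q (Hf (n+1)) Hf hd hbi' h0 rfl hmono' hcond' hm'
      rw [← hB] at IH
      have hgB : gfun (n+1) * B ≤ (gfun n / 4) * B := mul_le_mul_of_nonneg_right hgs hB0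
      linarith
    · -- Case B : many last-level edges; use key inequality
      push_neg at hsplit
      have hdegQ : ∀ v, deg Hs v ≤ β := by
        intro v
        have := deg_le_beta h0 hcond (n+2) le_rfl v
        rwa [hk] at this
      have hSH : Hf (n+2) \ Hf (n+1) ⊆ Hs := by
        rw [← hk]; exact sdiff_subset
      have hedeg : ∀ e ∈ Hf (n+2) \ Hf (n+1), edeg Hs e ≤ β := by
        intro e he
        have := hcond (n+2) (by omega) le_rfl e (by simpa using he)
        rwa [hk] at this
      have key := key_ineq hd hbi hSH hedeg hdegQ
      have h3g : 3 * gfun (n+1) = (gfun n)^2 / 16 := by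
        rw [gfun]; ring
      have key' : ((Hf (n+2) \ Hf (n+1)).card:ℝ)^2 + ((β:ℝ)*P.card) * Hs.card
          ≤ ((β:ℝ)*P.card) * ((β:ℝ) * Q.card) := by nlinarith [key]
      rw [hB] at hm hsplit ⊢
      exact arith2 (gfun n) (gfun (n+1)) ((β:ℝ)*P.card) (Hs.card) ((β:ℝ)*Q.card)
        ((Hf (n+2) \ Hf (n+1)).card) hgp hgp1 h3g (by positivity) (Nat.cast_nonneg _)
        (by positivity) key' (by linarith [hsplit]) hm


lemma arith3 (g h δ p q : ℝ) (hp : 1 ≤ p) (hδ0 : 0 ≤ δ) (hδh : 4*δ ≤ h)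
    (hgh : 3/8*h ≤ g) (hg16 : g ≤ 1/16) (hh : 0 < h)
    (hq : (1/2 + g - 3/2*δ)*p ≤ q) :
    1/2 + h/6 - 2/3*δ ≤ 2*q/(2*q+p) := by
  have hγ0 : 0 ≤ g - 3/2*δ := by linarith
  have hγ16 : g - 3/2*δ ≤ 1/16 := by linarith
  have hp0 : 0 < p := by linarith
  have hqp : (1/2)*p ≤ q := by nlinarith
  have hq0 : 0 < q := by linarith
  have hden : 0 < 2*q+p := by linarith
  rw [le_div_iff₀ hden]
  have hc : 0 ≤ 1/2 - h/6 + 2/3*δ := by linarith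
  have step : (1/2 - h/6 + 2/3*δ) * ((1/2 + g - 3/2*δ)*p) ≤ (1/2 - h/6 + 2/3*δ) * q :=
    mul_le_mul_of_nonneg_left hq hc
  have t0 : 0 ≤ h/3 - 4/3*δ := by linarith
  have tγ : (h/3 - 4/3*δ)*(g - 3/2*δ) ≤ (h/3 - 4/3*δ)*(1/16) :=
    mul_le_mul_of_nonneg_left hγ16 t0
  have scal : (1/2 + h/6 - 2/3*δ) ≤ (1/2 - h/6 + 2/3*δ)*(1 + 2*g - 3*δ) := by
    nlinarith [tγ, hgh, hδh]
  have scalp : (1/2 + h/6 - 2/3*δ)*p ≤ (1/2 - h/6 + 2/3*δ)*(1 + 2*g - 3*δ)*p :=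
    mul_le_mul_of_nonneg_right scal hp0.le
  nlinarith [step, scalp]

/-- If `0 ≤ δ ≤ 0.2`, `h(k) − 4δ ≥ 0`, and `H` is a bipartite
`(β,k)`-HEDCS with parts `P` (nonempty), `Q` and at least `(1−δ)·β·|P|/2` edges, then
`2|Q|/(2|Q| + |P|) ≥ 1/2 + h(k)/6 − (2/3)·δ`. -/
theorem bipartite_hedcs_alpha_bound {V : Type*} [DecidableEq V]
    (β k : ℕ) (hβ : 2 ≤ β) (hk : 1 ≤ k) (δ : ℝ)
    (hδ0 : 0 ≤ δ) (hδ1 : δ ≤ 0.2) (hhk : 0 ≤ hfun k - 4 * δ)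
    (P Q : Finset V) (Hs : Finset (Sym2 V)) (hP : P.Nonempty)
    (hH : IsBipartiteHEDCS P Q Hs β k)
    (hcard : (1 - δ) * (β : ℝ) * P.card / 2 ≤ (Hs.card : ℝ)) :
    1 / 2 + hfun k / 6 - (2 / 3) * δ ≤
      2 * (Q.card : ℝ) / (2 * (Q.card : ℝ) + (P.card : ℝ)) := by
  obtain ⟨hd, hbi, Hf, h0, hkk, hmono, hcond⟩ := hH
  obtain ⟨n, rfl⟩ : ∃ n, k = n + 1 := ⟨k - 1, by omega⟩
  have hβ0 : (0:ℝ) < β := by positivity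
  have hp1 : (1:ℝ) ≤ (P.card : ℝ) := by
    have := Finset.card_pos.mpr hP
    exact_mod_cast this
  -- m ≤ β q
  have hdegQ : ∀ v, deg Hs v ≤ β := by
    intro v
    have := deg_le_beta h0 hcond (n+1) le_rfl v
    rwa [hkk] at this
  have hqm : (Hs.card : ℝ) ≤ (β:ℝ) * Q.card := by
    have h1 : ∑ v ∈ Q, deg Hs v = Hs.card := sum_deg_Q hd hbi
    have h2 : ∑ v ∈ Q, deg Hs v ≤ Q.card * β := by
      calc ∑ v ∈ Q, deg Hs v ≤ ∑ _v ∈ Q, β := sum_le_sum (fun v _ => hdegQ v)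
        _ = Q.card * β := by rw [sum_const, smul_eq_mul]
    have : Hs.card ≤ Q.card * β := h1 ▸ h2
    have := (Nat.cast_le (α := ℝ)).mpr this
    push_cast at this
    linarith [this]
  have hg16 := gfun_le n
  have hgp := gfun_pos n
  -- main bound : (1/2 + g - 3/2 δ) * (β p) ≤ β q
  have hmain : (1/2 + gfun n - 3/2*δ) * ((β:ℝ) * P.card) ≤ (β:ℝ) * Q.card := by
    by_cases hcase : (Hs.card : ℝ) ≤ (1/2 + gfun n) * ((β:ℝ) * P.card)
    · have := main_ind β n P Q Hs Hf hd hbi h0 hkk hmono hcond hcase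
      have hm2 : (1 - δ) * ((β:ℝ) * P.card) / 2 ≤ (Hs.card : ℝ) := by
        calc (1 - δ) * ((β:ℝ) * P.card) / 2 = (1 - δ) * (β : ℝ) * P.card / 2 := by ring
          _ ≤ (Hs.card : ℝ) := hcard
      nlinarith [this, hm2]
    · push_neg at hcase
      have hB0 : (0:ℝ) ≤ (β:ℝ) * P.card := by positivity
      nlinarith [hqm, hcase, mul_nonneg hδ0 hB0]
  have hq : (1/2 + gfun n - 3/2*δ) * (P.card : ℝ) ≤ (Q.card : ℝ) := by
    have h1 : (β:ℝ) * ((1/2 + gfun n - 3/2*δ) * (P.card : ℝ)) ≤ (β:ℝ) * Q.card := by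
      calc (β:ℝ) * ((1/2 + gfun n - 3/2*δ) * (P.card : ℝ))
          = (1/2 + gfun n - 3/2*δ) * ((β:ℝ) * P.card) := by ring
        _ ≤ (β:ℝ) * Q.card := hmain
    exact le_of_mul_le_mul_left h1 hβ0
  have final := arith3 (gfun n) (hfun (n+1)) δ (P.card : ℝ) (Q.card : ℝ)
    hp1 hδ0 (by linarith [hhk]) (gfun_ge n) hg16 (hfun_pos (n+1)) hq
  calc 1 / 2 + hfun (n+1) / 6 - (2 / 3) * δ
      = 1/2 + hfun (n+1)/6 - 2/3*δ := by ring
    _ ≤ 2 * (Q.card : ℝ) / (2 * (Q.card : ℝ) + (P.card : ℝ)) := by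
        have : 2*(Q.card:ℝ)/(2*(Q.card:ℝ)+(P.card:ℝ)) = 2*(Q.card:ℝ)/(2*(Q.card:ℝ)+(P.card:ℝ)) := rfl
        convert final using 2 <;> ring
end

section
/- Let k ≥ 1 and β ≥ 2 be integers, let G be a bipartite graph, let U be a subgraph of G, and let H be a (β,k)-HEDCS of G \ U. Let f ≥ 0 be a real number such that every bipartite (β,k)-HEDCS with vertex parts P' and Q' having at least (β−1)·|P'|/2 edges satisfies |Q'| ≥ f·|P'|. Then μ(H ∪ U) ≥ (2f/(2f+1))·μ(G). -/
open Finset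

variable {V : Type*} [DecidableEq V]

/-!
By König's theorem the bipartite graph `H ∪ U` has a vertex cover `C` with `|C| ≤ μ(H ∪ U)`.
The edges of a maximum matching `M*` of `G` that avoid `C` form a matching `M₀` with
`μ(G) ≤ |M₀| + |C|`; they lie outside `H ∪ U`, so each has edge-degree at least `β - 1` in `H`.
Since `C` covers `H`, the edges of `H` at the `2|M₀|` vertices of `M₀` all run into `C`: they form a
bipartite `(β,k)`-HEDCS between `V(M₀)` and `C` with at least `(β - 1)|M₀|` edges, so the expansion
hypothesis gives `2f|M₀| ≤ |C|`. Hence `2f μ(G) ≤ 2f|M₀| + 2f|C| ≤ (2f + 1) μ(H ∪ U)`.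
-/

section Degrees

variable {E E' : Finset (Sym2 V)}

lemma deg_mono_s7 (h : E ⊆ E') (v : V) : deg E v ≤ deg E' v :=
  card_le_card (filter_subset_filter _ h)

lemma edeg_mono (h : E ⊆ E') (e : Sym2 V) : edeg E e ≤ edeg E' e := by
  induction e using Sym2.inductionOn with
  | hf a b => exact Nat.add_le_add (deg_mono_s7 h a) (deg_mono_s7 h b)

lemma card_filter_exists_mem_eq_sum_deg {P : Finset V}
    (hP : ∀ e ∈ E, ∀ u ∈ P, ∀ v ∈ P, u ∈ e → v ∈ e → u = v) :
    (E.filter fun e => ∃ v ∈ P, v ∈ e).card = ∑ v ∈ P, deg E v := by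
  have hstars : E.filter (fun e => ∃ v ∈ P, v ∈ e) = P.biUnion fun v => E.filter (v ∈ ·) := by
    ext e
    simp only [mem_filter, mem_biUnion]
    tauto
  rw [hstars, card_biUnion]
  · rfl
  · intro u hu v hv huv
    simp only [Function.onFun, disjoint_left, mem_filter]
    exact fun e ⟨he, hue⟩ ⟨_, hve⟩ => huv (hP e he u hu v hv hue hve)

end Degrees

def HasHierarchicalDecomposition (Hs : Finset (Sym2 V)) (β k : ℕ) : Prop :=
  ∃ H : ℕ → Finset (Sym2 V), H 0 = ∅ ∧ H k = Hs ∧ (∀ i < k, H i ⊆ H (i + 1)) ∧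
    ∀ i, 1 ≤ i → i ≤ k → ∀ e ∈ H i \ H (i - 1), edeg (H i) e ≤ β

lemma IsHEDCSgen.hasHierarchicalDecomposition {G Hs : Finset (Sym2 V)} {β βm k : ℕ}
    (h : IsHEDCSgen G Hs β βm k) : HasHierarchicalDecomposition Hs β k :=
  let ⟨_, H, h0, hk, hmono, hdeg, _⟩ := h
  ⟨H, h0, hk, hmono, hdeg⟩

lemma HasHierarchicalDecomposition.of_subset {Hs Hs' : Finset (Sym2 V)} {β k : ℕ}
    (h : HasHierarchicalDecomposition Hs β k) (hsub : Hs' ⊆ Hs) :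
    HasHierarchicalDecomposition Hs' β k := by
  obtain ⟨H, h0, hk, hmono, hdeg⟩ := h
  refine ⟨fun i => H i ∩ Hs', by simp [h0], by simp [hk, hsub],
    fun i hi => inter_subset_inter_right (hmono i hi), fun i h1 h2 e he => ?_⟩
  simp only [mem_sdiff, mem_inter, not_and] at he
  exact (edeg_mono inter_subset_left e).trans
    (hdeg i h1 h2 e (mem_sdiff.2 ⟨he.1.1, fun h => he.2 h he.1.2⟩))

def BipartiteHEDCSExpands (V : Type*) [DecidableEq V] (β k : ℕ) (f : ℝ) : Prop :=
  ∀ (P' Q' : Finset V) (H' : Finset (Sym2 V)),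
    IsBipartiteHEDCS P' Q' H' β k →
    ((β : ℝ) - 1) * P'.card / 2 ≤ (H'.card : ℝ) → f * P'.card ≤ (Q'.card : ℝ)

section MatchNum

variable {α : Type*} {M E : Finset (Sym2 α)}

lemma IsMatching.subset (hM : IsMatching M) {M' : Finset (Sym2 α)} (h : M' ⊆ M) :
    IsMatching M' :=
  ⟨fun e he => hM.1 e (h he), fun e he e' he' hne => hM.2 e (h he) e' (h he') hne⟩

lemma bddAbove_matchingCards (E : Finset (Sym2 α)) :
    BddAbove {n : ℕ | ∃ M ⊆ E, IsMatching M ∧ M.card = n} :=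
  ⟨E.card, by rintro n ⟨M, hME, -, rfl⟩; exact card_le_card hME⟩

lemma card_le_matchNum (hME : M ⊆ E) (hM : IsMatching M) : M.card ≤ matchNum E :=
  le_csSup (bddAbove_matchingCards E) ⟨M, hME, hM, rfl⟩

lemma exists_isMatching_card_eq_matchNum (E : Finset (Sym2 α)) :
    ∃ M ⊆ E, IsMatching M ∧ M.card = matchNum E :=
  Nat.sSup_mem (s := {n | ∃ M ⊆ E, IsMatching M ∧ M.card = n})
    ⟨0, ∅, empty_subset _, by simp [IsMatching], rfl⟩ (bddAbove_matchingCards E)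

end MatchNum

section Matching

variable {M : Finset (Sym2 V)}

lemma IsMatching.card_le_card_filter_add (hM : IsMatching M) (C : Finset V) :
    M.card ≤ (M.filter fun e => Disjoint e.toFinset C).card + C.card := by
  rw [← card_filter_add_card_filter_not (s := M) fun e => Disjoint e.toFinset C]
  gcongr
  -- distinct edges of a matching meet `C` in distinct vertices
  refine card_le_card_of_forall_subsingleton (fun e v => v ∈ e) (fun e he => ?_) ?_
  · obtain ⟨-, he⟩ := mem_filter.1 he
    obtain ⟨v, hve, hv⟩ := not_disjoint_iff.1 he
    exact ⟨v, hv, Sym2.mem_toFinset.1 hve⟩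
  · rintro v - e ⟨he, hve⟩ e' ⟨he', hve'⟩
    by_contra hne
    exact hM.2 e (mem_filter.1 he).1 e' (mem_filter.1 he').1 hne v hve hve'

lemma IsMatching.pairwiseDisjoint_toFinset (hM : IsMatching M) :
    (M : Set (Sym2 V)).PairwiseDisjoint Sym2.toFinset := by
  intro e he e' he' hne
  simp only [Function.onFun, disjoint_left, Sym2.mem_toFinset]
  exact fun v hv hv' => hM.2 e he e' he' hne v hv hv'

lemma IsMatching.card_biUnion_toFinset (hM : IsMatching M) :
    (M.biUnion Sym2.toFinset).card = 2 * M.card := by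
  rw [card_biUnion hM.pairwiseDisjoint_toFinset,
    sum_congr rfl fun e he => Sym2.card_toFinset_of_not_isDiag e (hM.1 e he), sum_const,
    smul_eq_mul, mul_comm]

lemma IsMatching.sum_deg_eq_sum_edeg (hM : IsMatching M) (E : Finset (Sym2 V)) :
    ∑ v ∈ M.biUnion Sym2.toFinset, deg E v = ∑ e ∈ M, edeg E e := by
  rw [sum_biUnion hM.pairwiseDisjoint_toFinset]
  refine sum_congr rfl fun e he => ?_
  induction e using Sym2.inductionOn with
  | hf a b =>
    have hab : a ≠ b := fun h => hM.1 _ he (Sym2.mk_isDiag_iff.2 h)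
    rw [Sym2.toFinset_mk_eq, sum_pair hab]
    rfl

end Matching

lemma eq_of_mem_mk_of_mem_left {α : Type*} {A B : Finset α} (hAB : Disjoint A B) {a b x : α}
    (hb : b ∈ B) (hx : x ∈ s(a, b)) (hxA : x ∈ A) : x = a := by
  rcases Sym2.mem_iff.1 hx with rfl | rfl
  · rfl
  · exact absurd hb (disjoint_left.1 hAB hxA)

section Konig

variable {A B : Finset V} {F : Finset (Sym2 V)}

def bipartiteNbhd (F : Finset (Sym2 V)) (B S : Finset V) : Finset V :=
  B.filter fun b => ∃ a ∈ S, s(a, b) ∈ F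

lemma exists_injective_mem_bipartiteNbhd_disjSum (d : ℕ)
    (hdef : ∀ S ⊆ A, S.card ≤ (bipartiteNbhd F B S).card + d) :
    ∃ g : A → V ⊕ ℕ, Function.Injective g ∧
      ∀ a, g a ∈ (bipartiteNbhd F B {a.1}).disjSum (range d) := by
  -- Hall's theorem after adding `d` dummy vertices adjacent to all of `A`
  refine (all_card_le_biUnion_card_iff_exists_injective _).1 fun s => ?_
  obtain rfl | ⟨a₀, ha₀⟩ := s.eq_empty_or_nonempty
  · simp
  have hsub : (bipartiteNbhd F B (s.image Subtype.val)).disjSum (range d) ⊆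
      s.biUnion fun a => (bipartiteNbhd F B {a.1}).disjSum (range d) := by
    rintro (b | n) h
    · simp only [inl_mem_disjSum, bipartiteNbhd, mem_filter, mem_image] at h
      obtain ⟨hb, _, ⟨a, ha, rfl⟩, hab⟩ := h
      exact mem_biUnion.2
        ⟨a, ha, inl_mem_disjSum.2 (mem_filter.2 ⟨hb, a, mem_singleton_self _, hab⟩)⟩
    · exact mem_biUnion.2 ⟨a₀, ha₀, inr_mem_disjSum.2 (inr_mem_disjSum.1 h)⟩
  calc s.card = (s.image Subtype.val).card :=
        (card_image_of_injective _ Subtype.val_injective).symm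
    _ ≤ (bipartiteNbhd F B (s.image Subtype.val)).card + d :=
        hdef _ fun x hx => by obtain ⟨a, -, rfl⟩ := mem_image.1 hx; exact a.2
    _ ≤ _ := by simpa using card_le_card hsub

open Classical in
lemma isMatching_filter_exists_eq_inl (hAB : Disjoint A B) {g : A → V ⊕ ℕ}
    (hg : Function.Injective g) (hgB : ∀ a b, g a = .inl b → b ∈ B) :
    IsMatching (F.filter fun e => ∃ a : A, ∃ b, g a = .inl b ∧ e = s(a.1, b)) := by
  refine ⟨fun e he => ?_, fun e he e' he' hne v hv hv' => hne ?_⟩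
  · obtain ⟨-, a, b, hab, rfl⟩ := mem_filter.1 he
    rw [Sym2.mk_isDiag_iff]
    exact fun h => disjoint_left.1 hAB a.2 (h ▸ hgB a b hab)
  · obtain ⟨-, a, b, hab, rfl⟩ := mem_filter.1 he
    obtain ⟨-, a', b', hab', rfl⟩ := mem_filter.1 he'
    obtain rfl : a = a' := by
      by_cases hvA : v ∈ A
      · exact Subtype.ext ((eq_of_mem_mk_of_mem_left hAB (hgB a b hab) hv hvA).symm.trans
          (eq_of_mem_mk_of_mem_left hAB (hgB a' b' hab') hv' hvA))
      · have hvb : v = b := (Sym2.mem_iff.1 hv).resolve_left fun h => hvA (h ▸ a.2)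
        have hvb' : v = b' := (Sym2.mem_iff.1 hv').resolve_left fun h => hvA (h ▸ a'.2)
        exact hg (by rw [hab, hab', ← hvb, ← hvb'])
    rw [Sum.inl_injective (hab.symm.trans hab')]

lemma exists_isMatching_card_add_ge (hAB : Disjoint A B) (d : ℕ)
    (hdef : ∀ S ⊆ A, S.card ≤ (bipartiteNbhd F B S).card + d) :
    ∃ M ⊆ F, IsMatching M ∧ A.card ≤ M.card + d := by
  classical
  obtain ⟨g, hg, hgt⟩ := exists_injective_mem_bipartiteNbhd_disjSum d hdef
  have hgB : ∀ a b, g a = .inl b → b ∈ B ∧ s(a.1, b) ∈ F := by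
    intro a b h
    have := hgt a
    simp only [h, inl_mem_disjSum, bipartiteNbhd, mem_filter, mem_singleton] at this
    obtain ⟨hb, _, rfl, hab⟩ := this
    exact ⟨hb, hab⟩
  set M := F.filter fun e => ∃ a : A, ∃ b, g a = .inl b ∧ e = s(a.1, b)
  refine ⟨M, filter_subset _ _,
    isMatching_filter_exists_eq_inl hAB hg fun a b h => (hgB a b h).1, ?_⟩
  have hleft : (univ.filter fun a : A => ∃ b, g a = .inl b).card ≤ M.card := by
    refine card_le_card_of_forall_subsingleton (fun a e => a.1 ∈ e) (fun a ha => ?_) ?_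
    · obtain ⟨b, hab⟩ := (mem_filter.1 ha).2
      exact ⟨s(a.1, b), mem_filter.2 ⟨(hgB a b hab).2, a, b, hab, rfl⟩, Sym2.mem_mk_left _ _⟩
    · rintro e he a ⟨-, hae⟩ a' ⟨-, ha'e⟩
      obtain ⟨-, a₀, b, hab, rfl⟩ := mem_filter.1 he
      have hbB := (hgB a₀ b hab).1
      exact Subtype.ext ((eq_of_mem_mk_of_mem_left hAB hbB hae a.2).trans
        (eq_of_mem_mk_of_mem_left hAB hbB ha'e a'.2).symm)
  have hright : (univ.filter fun a : A => ¬ ∃ b, g a = .inl b).card ≤ d := by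
    refine (card_le_card_of_forall_subsingleton (fun a n => g a = .inr n) (t := range d)
      (fun a ha => ?_) fun n _ a ⟨_, ha⟩ a' ⟨_, ha'⟩ => hg (ha.trans ha'.symm)).trans (by simp)
    have hga := hgt a
    rcases hga' : g a with b | n
    · exact absurd ⟨b, hga'⟩ (mem_filter.1 ha).2
    · rw [hga', inr_mem_disjSum] at hga
      exact ⟨n, hga, rfl⟩
  have := card_filter_add_card_filter_not (s := (univ : Finset A)) fun a => ∃ b, g a = .inl b
  rw [card_univ, Fintype.card_coe] at this
  omega

theorem exists_cover_card_le_matchNum (hAB : Disjoint A B)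
    (hF : ∀ e ∈ F, ∃ u v, e = s(u, v) ∧ u ∈ A ∧ v ∈ B) :
    ∃ C : Finset V, C.card ≤ matchNum F ∧ ∀ e ∈ F, ∃ v ∈ C, v ∈ e := by
  obtain ⟨S, hSA, hSmax⟩ := exists_max_image A.powerset
    (fun S => (S.card : ℤ) - (bipartiteNbhd F B S).card) ⟨∅, empty_mem_powerset A⟩
  have hSA : S ⊆ A := mem_powerset.1 hSA
  have hS0 : (bipartiteNbhd F B S).card ≤ S.card := by
    have := hSmax ∅ (empty_mem_powerset A)
    rw [show bipartiteNbhd F B ∅ = ∅ by simp [bipartiteNbhd]] at this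
    simp only [card_empty, CharP.cast_eq_zero, sub_zero] at this
    omega
  obtain ⟨M, hMF, hM, hMcard⟩ := exists_isMatching_card_add_ge (F := F) hAB
    (S.card - (bipartiteNbhd F B S).card)
    fun T hT => by have := hSmax T (mem_powerset.2 hT); omega
  refine ⟨(A \ S) ∪ bipartiteNbhd F B S, ?_, fun e he => ?_⟩
  · have h1 := card_le_matchNum hMF hM
    have h2 := card_union_le (A \ S) (bipartiteNbhd F B S)
    have h3 := card_sdiff_of_subset hSA
    have h4 := card_le_card hSA
    omega
  · obtain ⟨u, v, rfl, hu, hv⟩ := hF e he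
    by_cases huS : u ∈ S
    · exact ⟨v, mem_union_right _ (mem_filter.2 ⟨hv, u, huS, he⟩), Sym2.mem_mk_right u v⟩
    · exact ⟨u, mem_union_left _ (mem_sdiff.2 ⟨hu, huS⟩), Sym2.mem_mk_left u v⟩

end Konig

lemma two_mul_card_le_of_bipartiteHEDCSExpands {Hs : Finset (Sym2 V)} {β k : ℕ} {f : ℝ}
    (hH : HasHierarchicalDecomposition Hs β k) (hexp : BipartiteHEDCSExpands V β k f)
    {C : Finset V} (hC : ∀ e ∈ Hs, ∃ v ∈ C, v ∈ e)
    {M : Finset (Sym2 V)} (hM : IsMatching M) (hMC : ∀ e ∈ M, Disjoint e.toFinset C)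
    (hdeg : ∀ e ∈ M, β - 1 ≤ edeg Hs e) :
    f * (2 * M.card) ≤ C.card := by
  set P := M.biUnion Sym2.toFinset
  set H' := Hs.filter fun e => ∃ v ∈ P, v ∈ e
  have hPC : Disjoint P C := (disjoint_biUnion_left _ _ _).2 hMC
  -- every edge of `Hs` meets `C`, so it has at most one endpoint in `P`
  have hPe : ∀ e ∈ Hs, ∀ p ∈ P, p ∈ e → ∃ c ∈ C, e = s(p, c) := by
    intro e he p hp hpe
    obtain ⟨c, hc, hce⟩ := hC e he
    have hpc : p ≠ c := fun h => disjoint_left.1 hPC hp (h ▸ hc)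
    exact ⟨c, hc, (Sym2.mem_and_mem_iff hpc).1 ⟨hpe, hce⟩⟩
  have hbip : IsBipartiteHEDCS P C H' β k := by
    refine ⟨hPC, fun e he => ?_, hH.of_subset (filter_subset _ _)⟩
    obtain ⟨he, p, hp, hpe⟩ := mem_filter.1 he
    obtain ⟨c, hc, rfl⟩ := hPe e he p hp hpe
    exact ⟨p, c, rfl, hp, hc⟩
  have hH'card : (β - 1) * M.card ≤ H'.card := by
    rw [card_filter_exists_mem_eq_sum_deg fun e he u hu v hv hue hve => ?_,
      hM.sum_deg_eq_sum_edeg, mul_comm]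
    · exact card_nsmul_le_sum M _ _ hdeg
    obtain ⟨c, hc, rfl⟩ := hPe e he u hu hue
    exact ((Sym2.mem_iff.1 hve).resolve_right fun h => disjoint_left.1 hPC hv (h ▸ hc)).symm
  have hβ_cast : (β : ℝ) - 1 ≤ ((β - 1 : ℕ) : ℝ) := by
    rw [sub_le_iff_le_add]; exact_mod_cast (by omega : β ≤ β - 1 + 1)
  have := hexp P C H' hbip (by
    rw [hM.card_biUnion_toFinset, Nat.cast_mul]
    calc ((β : ℝ) - 1) * (2 * M.card) / 2 = ((β : ℝ) - 1) * M.card := by ring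
      _ ≤ ((β - 1 : ℕ) : ℝ) * M.card := by gcongr
      _ ≤ H'.card := by exact_mod_cast hH'card)
  rwa [hM.card_biUnion_toFinset, Nat.cast_mul, Nat.cast_two] at this

theorem hedcs_approx_bipartite_general {V : Type*} [DecidableEq V]
    (β k : ℕ)
    (A B : Finset V) (G U Hs : Finset (Sym2 V))
    (hAB : Disjoint A B)
    (hGbip : ∀ e ∈ G, ∃ u v, e = s(u, v) ∧ u ∈ A ∧ v ∈ B)
    (hU : U ⊆ G)
    (hH : IsHEDCS (G \ U) Hs β k)
    (f : ℝ) (hf : 0 ≤ f)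
    (hfprop : ∀ (P' Q' : Finset V) (H' : Finset (Sym2 V)),
      IsBipartiteHEDCS P' Q' H' β k →
      ((β : ℝ) - 1) * P'.card / 2 ≤ (H'.card : ℝ) → f * P'.card ≤ (Q'.card : ℝ)) :
    2 * f / (2 * f + 1) * (matchNum G : ℝ) ≤ (matchNum (Hs ∪ U) : ℝ) := by
  have hHier := IsHEDCSgen.hasHierarchicalDecomposition hH
  obtain ⟨hHsub, -, -, -, -, -, hHout⟩ := hH
  have hHsG : Hs ⊆ G := hHsub.trans sdiff_subset
  obtain ⟨Mstar, hMstarG, hMstar, hMstar_card⟩ := exists_isMatching_card_eq_matchNum G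
  obtain ⟨C, hC_card, hC⟩ :=
    exists_cover_card_le_matchNum hAB fun e he => hGbip e (union_subset hHsG hU he)
  set M₀ := Mstar.filter fun e => Disjoint e.toFinset C
  have hM₀deg : ∀ e ∈ M₀, β - 1 ≤ edeg Hs e := by
    intro e he
    obtain ⟨heM, heC⟩ := mem_filter.1 he
    have hcov : e ∉ Hs ∪ U := fun h => by
      obtain ⟨v, hv, hve⟩ := hC e h
      exact disjoint_left.1 heC (Sym2.mem_toFinset.2 hve) hv
    rw [mem_union, not_or] at hcov
    exact hHout e (mem_sdiff.2 ⟨mem_sdiff.2 ⟨hMstarG heM, hcov.2⟩, hcov.1⟩)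
  have hexp := two_mul_card_le_of_bipartiteHEDCSExpands hHier hfprop
    (fun e he => hC e (mem_union_left U he)) (hMstar.subset (filter_subset _ _))
    (fun e he => (mem_filter.1 he).2) hM₀deg
  have hsplit : (matchNum G : ℝ) ≤ M₀.card + C.card := by
    rw [← hMstar_card]; exact_mod_cast hMstar.card_le_card_filter_add C
  have hC_cardR : (C.card : ℝ) ≤ matchNum (Hs ∪ U) := by exact_mod_cast hC_card
  rw [div_mul_eq_mul_div, div_le_iff₀ (by positivity)]
  calc 2 * f * matchNum G ≤ 2 * f * (M₀.card + C.card) := by gcongr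
    _ = f * (2 * M₀.card) + 2 * f * C.card := by ring
    _ ≤ (2 * f + 1) * C.card := by linarith
    _ ≤ matchNum (Hs ∪ U) * (2 * f + 1) := by rw [mul_comm]; gcongr

/-- Let `G` be bipartite, `U ⊆ G`, and `H` a `(β,k)`-HEDCS of `G \ U`.
If `f ≥ 0` is such that every bipartite `(β,k)`-HEDCS with parts `P'`, `Q'` and at least
`(β−1)·|P'|/2` edges satisfies `|Q'| ≥ f·|P'|`, then `μ(H ∪ U) ≥ (2f/(2f+1))·μ(G)`. -/
theorem hedcs_approx_bipartite {V : Type*} [DecidableEq V]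
    (β k : ℕ) (hβ : 2 ≤ β) (hk : 1 ≤ k)
    (A B : Finset V) (G U Hs : Finset (Sym2 V))
    (hAB : Disjoint A B)
    (hGbip : ∀ e ∈ G, ∃ u v, e = s(u, v) ∧ u ∈ A ∧ v ∈ B)
    (hU : U ⊆ G)
    (hH : IsHEDCS (G \ U) Hs β k)
    (f : ℝ) (hf : 0 ≤ f)
    (hfprop : ∀ (P' Q' : Finset V) (H' : Finset (Sym2 V)),
      IsBipartiteHEDCS P' Q' H' β k →
      ((β : ℝ) - 1) * P'.card / 2 ≤ (H'.card : ℝ) → f * P'.card ≤ (Q'.card : ℝ)) :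
    2 * f / (2 * f + 1) * (matchNum G : ℝ) ≤ (matchNum (Hs ∪ U) : ℝ) :=
  hedcs_approx_bipartite_general β k A B G U Hs hAB hGbip hU hH f hf hfprop
end
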